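/- arXiv:0806.4471 — 3 statements merged into one kernel-verified Lean document; each statement's English description precedes it below -/
import Mathlib

section
/- Let p be a prime and n a positive integer. For every integer k with 1 ≤ k ≤ ⌊(n+1)/2⌋, the power p^(n+1) is the sum of p^k successive odd positive numbers, namely p^(n+1) = ∑_{i=0}^{p^k - 1} (p^(n-k+1) - p^k + 1 + 2i), where the first term p^(n-k+1) - p^k + 1 is a positive odd integer. Moreover, p^(n+1) admits no representation as a sum of r ≥ 2 successive even positive numbers. -/
/-!
The sum of `m` successive terms `c, c + 2, …` is `m (c + m - 1)`. With `m = p ^ k` and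
`c = p ^ (n - k + 1) - p ^ k + 1` this is `p ^ k * p ^ (n - k + 1) = p ^ (n + 1)`, and `c` is odd
because two powers of `p` with positive exponents have the same parity.

A sum of even numbers is even, so an even representation forces `p = 2`. Then
`2 ^ (n + 1) = r (a + r - 1)` with both factors at least `2`, so both are even, although their
sum `a + 2r - 1` is odd.
-/

open Finset

theorem Nat.sum_range_add_two_mul (c m : ℕ) :
    ∑ i ∈ range m, (c + 2 * i) = m * (c + m - 1) := by
  rw [sum_add_distrib, ← mul_sum, sum_const, card_range, smul_eq_mul, mul_comm 2,
    sum_range_id_mul_two]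
  cases m with
  | zero => simp
  | succ m => simp only [Nat.add_sub_cancel, ← Nat.add_assoc]; ring

theorem Nat.sum_range_sub_add_one_add_two_mul {a m : ℕ} (h : m ≤ a) :
    ∑ i ∈ range m, (a - m + 1 + 2 * i) = m * a := by
  rw [Nat.sum_range_add_two_mul]
  congr 1
  omega

theorem Nat.even_pow_sub_pow (p : ℕ) {i j : ℕ} (hi : i ≠ 0) (hj : j ≠ 0) :
    Even (p ^ i - p ^ j) := by
  rcases le_or_gt (p ^ j) (p ^ i) with h | h
  · rw [Nat.even_sub h, Nat.even_pow, Nat.even_pow]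
    tauto
  · rw [Nat.sub_eq_zero_of_le h.le]
    exact ⟨0, rfl⟩

theorem Nat.Prime.dvd_of_dvd_pow_of_ne_one {p r m : ℕ} (hp : p.Prime) (h : r ∣ p ^ m)
    (hr : r ≠ 1) : p ∣ r := by
  by_contra hpr
  exact hr (((hp.coprime_iff_not_dvd.2 hpr).pow_left m).symm.eq_one_of_dvd h)

theorem Nat.Prime.pow_ne_sum_range_even_add_two_mul {p m r a : ℕ} (hp : p.Prime) (hr : 2 ≤ r)
    (ha : 0 < a) (hea : Even a) : p ^ m ≠ ∑ i ∈ range r, (a + 2 * i) := by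
  intro h
  have hsum_even : Even (p ^ m) :=
    h ▸ even_sum _ fun i _ => hea.add (even_two_mul i)
  obtain rfl : p = 2 := hp.even_iff.1 (Nat.even_pow.1 hsum_even).1
  rw [Nat.sum_range_add_two_mul] at h
  have h2r : 2 ∣ r := hp.dvd_of_dvd_pow_of_ne_one (Dvd.intro _ h.symm) (by omega)
  have h2s : 2 ∣ a + r - 1 := hp.dvd_of_dvd_pow_of_ne_one (Dvd.intro_left _ h.symm) (by omega)
  obtain ⟨c, rfl⟩ := hea
  omega

theorem prime_pow_sums_of_successive_odds_general (p n : ℕ) (hp : p.Prime) :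
    (∀ k : ℕ, 1 ≤ k → k ≤ (n + 1) / 2 →
      0 < p ^ (n - k + 1) - p ^ k + 1 ∧
      Odd (p ^ (n - k + 1) - p ^ k + 1) ∧
      p ^ (n + 1) = ∑ i ∈ Finset.range (p ^ k), (p ^ (n - k + 1) - p ^ k + 1 + 2 * i)) ∧
    ¬ ∃ r a : ℕ, 2 ≤ r ∧ 0 < a ∧ Even a ∧
        p ^ (n + 1) = ∑ i ∈ Finset.range r, (a + 2 * i) := by
  refine ⟨fun k hk hkn => ?_, fun ⟨r, a, hr, ha, hea, h⟩ =>
    hp.pow_ne_sum_range_even_add_two_mul hr ha hea h⟩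
  have hle : p ^ k ≤ p ^ (n - k + 1) := Nat.pow_le_pow_right hp.pos (by omega)
  refine ⟨Nat.succ_pos _, (Nat.even_pow_sub_pow p (by omega) (by omega)).add_one, ?_⟩
  rw [Nat.sum_range_sub_add_one_add_two_mul hle, ← pow_add]
  congr 1
  omega

/-- For a prime p and positive n, for each 1 ≤ k ≤ ⌊(n+1)/2⌋, p^(n+1) is a
sum of p^k successive odd positive numbers starting at p^(n-k+1) - p^k + 1;
moreover p^(n+1) has no representation as a sum of r ≥ 2 successive even
positive numbers. -/
theorem prime_pow_sums_of_successive_odds (p n : ℕ) (hp : p.Prime) (hn : 1 ≤ n) :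
    (∀ k : ℕ, 1 ≤ k → k ≤ (n + 1) / 2 →
      0 < p ^ (n - k + 1) - p ^ k + 1 ∧
      Odd (p ^ (n - k + 1) - p ^ k + 1) ∧
      p ^ (n + 1) = ∑ i ∈ Finset.range (p ^ k), (p ^ (n - k + 1) - p ^ k + 1 + 2 * i)) ∧
    ¬ ∃ r a : ℕ, 2 ≤ r ∧ 0 < a ∧ Even a ∧
        p ^ (n + 1) = ∑ i ∈ Finset.range r, (a + 2 * i) :=
  prime_pow_sums_of_successive_odds_general p n hp
end

section
/- Let m and n be positive integers with 2m + 1 < 2^(n+1), and let N = 2^n·(2m+1). Then N has at least one representation as a sum of r ≥ 2 consecutive positive integers, and every representation of N as a sum of r ≥ 2 consecutive positive integers has an odd number of terms (r is odd). -/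
/-!
Twice a sum of `r` consecutive integers from `a` is `r (2a + r - 1)`, a product of two factors of
opposite parity. For `N = 2ⁿ q` with `q` odd and `q < 2ⁿ⁺¹`, the `q` terms centred at `2ⁿ` represent
`N`. In an even-length representation the odd factor is `2a + r - 1`, so all of `2ⁿ⁺¹` divides `r`;
then `r ≥ 2ⁿ⁺¹` and `2a + r - 1 > r > q`, so the product exceeds `2ⁿ⁺¹ q`.
-/

open Finset

theorem two_mul_sum_range_add (a r : ℕ) :
    2 * ∑ i ∈ range r, (a + i) = r * (2 * a + r - 1) := by
  have gauss := sum_range_id_mul_two r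
  rw [sum_add_distrib, sum_const, card_range, smul_eq_mul]
  rcases r with _ | r
  · simp
  · simp only [Nat.add_sub_cancel] at gauss
    rw [show 2 * a + (r + 1) - 1 = 2 * a + r by omega]
    linarith

theorem sum_range_centered {k m : ℕ} (hmk : m ≤ k) :
    ∑ i ∈ range (2 * m + 1), (k - m + i) = (2 * m + 1) * k := by
  have h := two_mul_sum_range_add (k - m) (2 * m + 1)
  rw [show 2 * (k - m) + (2 * m + 1) - 1 = 2 * k by omega] at h
  linarith

theorem two_pow_succ_dvd_of_even_of_sum_range_add {n q r a : ℕ} (hq : Odd q) (hr : Even r)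
    (hN : 2 ^ n * q = ∑ i ∈ range r, (a + i)) : 2 ^ (n + 1) ∣ r := by
  have hfactor : r * (2 * a + r - 1) = 2 ^ (n + 1) * q := by
    rw [← two_mul_sum_range_add, ← hN, pow_succ]; ring
  have hcofactor : Odd (2 * a + r - 1) := by
    obtain ⟨k, rfl⟩ := hr
    have hk : k ≠ 0 := by rintro rfl; simp [hq.pos.ne'] at hN
    exact ⟨a + k - 1, by omega⟩
  exact (Nat.Coprime.pow_left _ (Nat.coprime_two_left.mpr hcofactor)).dvd_of_dvd_mul_right
    ⟨q, hfactor⟩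

theorem odd_of_sum_range_add_eq {n q r a : ℕ} (hq : Odd q) (hqn : q < 2 ^ (n + 1)) (ha : 0 < a)
    (hN : 2 ^ n * q = ∑ i ∈ range r, (a + i)) : Odd r := by
  by_contra hodd
  have hdvd := two_pow_succ_dvd_of_even_of_sum_range_add hq (Nat.not_odd_iff_even.mp hodd) hN
  have hr : 0 < r := Nat.pos_of_ne_zero (by rintro rfl; simp [hq.pos.ne'] at hN)
  have hrq : q < 2 * a + r - 1 := by
    have := Nat.le_of_dvd hr hdvd; omega
  have hlt : 2 ^ (n + 1) * q < r * (2 * a + r - 1) :=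
    Nat.mul_lt_mul_of_le_of_lt (Nat.le_of_dvd hr hdvd) hrq hr
  rw [← two_mul_sum_range_add, ← hN, pow_succ] at hlt
  linarith

theorem small_odd_part_exclusively_odd_length_sums_general (m n : ℕ) (hm : 0 < m)
    (h : 2 * m + 1 < 2 ^ (n + 1)) :
    (∃ r a : ℕ, 2 ≤ r ∧ 0 < a ∧
      2 ^ n * (2 * m + 1) = ∑ i ∈ Finset.range r, (a + i)) ∧
    (∀ r a : ℕ, 2 ≤ r → 0 < a →
      2 ^ n * (2 * m + 1) = ∑ i ∈ Finset.range r, (a + i) → Odd r) := by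
  have hm_lt : m < 2 ^ n := by rw [pow_succ] at h; omega
  refine ⟨⟨2 * m + 1, 2 ^ n - m, by omega, by omega, ?_⟩, fun r a _ ha hN => ?_⟩
  · rw [sum_range_centered hm_lt.le, mul_comm]
  · exact odd_of_sum_range_add_eq (odd_two_mul_add_one m) h ha hN

/-- If 2m+1 < 2^(n+1) with m, n ≥ 1, then N = 2^n·(2m+1) is a sum of r ≥ 2
consecutive positive integers, and every such representation of N has an odd
number of terms. -/
theorem small_odd_part_exclusively_odd_length_sums (m n : ℕ) (hm : 0 < m) (hn : 0 < n)
    (h : 2 * m + 1 < 2 ^ (n + 1)) :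
    (∃ r a : ℕ, 2 ≤ r ∧ 0 < a ∧
      2 ^ n * (2 * m + 1) = ∑ i ∈ Finset.range r, (a + i)) ∧
    (∀ r a : ℕ, 2 ≤ r → 0 < a →
      2 ^ n * (2 * m + 1) = ∑ i ∈ Finset.range r, (a + i) → Odd r) :=
  small_odd_part_exclusively_odd_length_sums_general m n hm h
end

section
/- Let m and n be positive integers such that 2m + 1 is composite and 2m + 1 > 2^n, and let N = 2^(n-1)·(2m+1). Then N has at least one representation as a sum of an odd number r ≥ 3 of consecutive positive integers, and at least one representation as a sum of an even number r ≥ 2 of consecutive positive integers. -/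
/-!
Split off the least prime factor `p = 2k + 1` of the composite odd part `M = 2m + 1`: since
`p² ≤ M`, the cofactor `q = M / p` exceeds `k`, so `N = p · (2ⁿ⁻¹ q)` is the sum of the `p`
consecutive integers centred at `2ⁿ⁻¹ q`. Writing `N = 2ⁿ⁻¹ · (2m + 1)` instead, `N` is the sum of
the `2ⁿ` consecutive integers centred at `m + 1/2`, and these are positive because `2ⁿ < 2m + 1`.
-/

open Finset

theorem sum_range_add_mul_two (a r : ℕ) :
    (∑ i ∈ range r, (a + i)) * 2 = r * (2 * a + r - 1) := by
  rw [sum_add_distrib, add_mul, sum_range_id_mul_two, sum_const, card_range, smul_eq_mul]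
  rcases r with _ | r
  · simp
  · simp only [Nat.add_sub_cancel]
    rw [show 2 * a + (r + 1) - 1 = 2 * a + r by omega]
    ring

theorem sum_range_odd_add (a k : ℕ) :
    ∑ i ∈ range (2 * k + 1), (a + i) = (2 * k + 1) * (a + k) := by
  have h := sum_range_add_mul_two a (2 * k + 1)
  rw [show 2 * a + (2 * k + 1) - 1 = 2 * (a + k) by omega] at h
  linarith

theorem sum_range_even_add (a k : ℕ) :
    ∑ i ∈ range (2 * k), (a + i) = k * (2 * a + 2 * k - 1) := by
  have h := sum_range_add_mul_two a (2 * k)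
  rw [mul_assoc, mul_comm] at h
  omega

theorem exists_sum_range_odd_eq_mul {k c : ℕ} (h : k < c) :
    ∃ a, 0 < a ∧ (2 * k + 1) * c = ∑ i ∈ range (2 * k + 1), (a + i) :=
  ⟨c - k, by omega, by rw [sum_range_odd_add, Nat.sub_add_cancel h.le]⟩

theorem exists_sum_range_even_eq_mul {k c : ℕ} (h : k ≤ c) :
    ∃ a, 0 < a ∧ k * (2 * c + 1) = ∑ i ∈ range (2 * k), (a + i) :=
  ⟨c - k + 1, by omega, by rw [sum_range_even_add]; congr 1; omega⟩

theorem Nat.exists_odd_mul_eq_of_odd_of_not_prime {M : ℕ} (hodd : Odd M) (hM : M ≠ 1)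
    (hcomp : ¬ M.Prime) : ∃ k q, 1 ≤ k ∧ k < q ∧ (2 * k + 1) * q = M := by
  have hM0 : 0 < M := hodd.pos
  have hp : M.minFac.Prime := Nat.minFac_prime hM
  obtain ⟨k, hk⟩ : Odd M.minFac := hodd.of_dvd_nat (Nat.minFac_dvd M)
  have hpq : M.minFac ≤ M / M.minFac := Nat.minFac_le_div hM0 hcomp
  refine ⟨k, M / M.minFac, ?_, by omega, ?_⟩
  · have := hp.two_le
    omega
  · rw [← hk, Nat.mul_div_cancel' (Nat.minFac_dvd M)]

theorem large_composite_odd_part_both_length_sums_general (m n : ℕ) (hn : 0 < n)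
    (hcomp : ¬ (2 * m + 1).Prime) (hgt : 2 ^ n < 2 * m + 1) :
    (∃ r a : ℕ, 3 ≤ r ∧ Odd r ∧ 0 < a ∧
      2 ^ (n - 1) * (2 * m + 1) = ∑ i ∈ Finset.range r, (a + i)) ∧
    (∃ r a : ℕ, 2 ≤ r ∧ Even r ∧ 0 < a ∧
      2 ^ (n - 1) * (2 * m + 1) = ∑ i ∈ Finset.range r, (a + i)) := by
  have hpow : 2 ^ n = 2 * 2 ^ (n - 1) := by
    rw [← pow_succ', Nat.sub_add_cancel hn]
  have hpos : 0 < 2 ^ (n - 1) := by positivity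
  constructor
  · obtain ⟨k, q, hk, hkq, hM⟩ :=
      Nat.exists_odd_mul_eq_of_odd_of_not_prime (odd_two_mul_add_one m) (by omega) hcomp
    have hkq' : k < 2 ^ (n - 1) * q := lt_of_lt_of_le hkq (Nat.le_mul_of_pos_left q hpos)
    obtain ⟨a, ha, hsum⟩ := exists_sum_range_odd_eq_mul hkq'
    refine ⟨2 * k + 1, a, by omega, odd_two_mul_add_one k, ha, ?_⟩
    rw [← hsum, ← hM]
    ring
  · obtain ⟨a, ha, hsum⟩ := exists_sum_range_even_eq_mul (by omega : 2 ^ (n - 1) ≤ m)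
    exact ⟨2 * 2 ^ (n - 1), a, by omega, even_two_mul _, ha, hsum⟩

/-- If 2m+1 is composite and exceeds 2^n (m, n ≥ 1), then N = 2^(n-1)·(2m+1)
has at least one representation as a sum of an odd number r ≥ 3 of consecutive
positive integers and at least one representation as a sum of an even number
r ≥ 2 of consecutive positive integers. -/
theorem large_composite_odd_part_both_length_sums (m n : ℕ) (hm : 0 < m) (hn : 0 < n)
    (hcomp : ¬ (2 * m + 1).Prime) (hgt : 2 ^ n < 2 * m + 1) :
    (∃ r a : ℕ, 3 ≤ r ∧ Odd r ∧ 0 < a ∧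
      2 ^ (n - 1) * (2 * m + 1) = ∑ i ∈ Finset.range r, (a + i)) ∧
    (∃ r a : ℕ, 2 ≤ r ∧ Even r ∧ 0 < a ∧
      2 ^ (n - 1) * (2 * m + 1) = ∑ i ∈ Finset.range r, (a + i)) :=
  large_composite_odd_part_both_length_sums_general m n hn hcomp hgt
end
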